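/- Let D be an edge set with u,v connected in G−D, and suppose u' is u-clean with respect to D and π_{G−D}(u,v) passes through u'. Let D* be any edge set such that π(u,u') contains no edge of D* and no vertex of T_u(u') is incident to an edge of D*. If π_{G−D}(u,v) traverses an edge e ∈ D*, then for each endpoint x of e, the path π(u,x) contains an edge of D. -/
import Mathlib


open SimpleGraph

variable {V : Type*}

/-- Total weight of a walk with respect to edge weights `w`. -/
def walkWeight (w : Sym2 V → ℝ) {G : SimpleGraph V} {a b : V} (p : G.Walk a b) : ℝ :=
  (p.edges.map w).sum

/-- `p` is the/a minimum-weight path from `a` to `b` in `G`. -/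
def IsShortestPath (w : Sym2 V → ℝ) (G : SimpleGraph V) {a b : V} (p : G.Walk a b) : Prop :=
  p.IsPath ∧ ∀ q : G.Walk a b, q.IsPath → walkWeight w p ≤ walkWeight w q

lemma walkWeight_append (w : Sym2 V → ℝ) {G : SimpleGraph V} {a b c : V}
    (p : G.Walk a b) (q : G.Walk b c) :
    walkWeight w (p.append q) = walkWeight w p + walkWeight w q := by
  simp [walkWeight, Walk.edges_append]

lemma walkWeight_nonneg (w : Sym2 V → ℝ) {G : SimpleGraph V} {a b : V}
    (p : G.Walk a b) (h : ∀ e ∈ p.edges, 0 ≤ w e) : 0 ≤ walkWeight w p := by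
  apply List.sum_nonneg
  intro x hx
  obtain ⟨e, he, rfl⟩ := List.mem_map.1 hx
  exact h e he

lemma walkWeight_dropUntil_le [DecidableEq V] (w : Sym2 V → ℝ) {G : SimpleGraph V} {a b x : V}
    (p : G.Walk a b) (hx : x ∈ p.support) (h : ∀ e ∈ p.edges, 0 ≤ w e) :
    walkWeight w (p.dropUntil x hx) ≤ walkWeight w p := by
  conv_rhs => rw [← p.take_spec hx]
  rw [walkWeight_append]
  have : 0 ≤ walkWeight w (p.takeUntil x hx) :=
    walkWeight_nonneg w _ (fun e he => h e (p.edges_takeUntil_subset hx he))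
  linarith

lemma walkWeight_bypass_le [DecidableEq V] (w : Sym2 V → ℝ) {G : SimpleGraph V} {a b : V}
    (p : G.Walk a b) (h : ∀ e ∈ p.edges, 0 ≤ w e) :
    walkWeight w p.bypass ≤ walkWeight w p := by
  induction p with
  | nil => simp [Walk.bypass]
  | cons ha p ih =>
    rename_i u x y
    simp only [Walk.bypass]
    have hne : ∀ e ∈ p.edges, 0 ≤ w e := fun e he => h e (by simp [he])
    have hwe : 0 ≤ w s(u, x) := h _ (by simp)
    have hcons : walkWeight w (Walk.cons ha p) = w s(u,x) + walkWeight w p := by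
      simp [walkWeight]
    split
    · next hs =>
      calc walkWeight w (p.bypass.dropUntil u hs)
          ≤ walkWeight w p.bypass :=
            walkWeight_dropUntil_le w _ hs (fun e he => hne e (p.edges_bypass_subset he))
        _ ≤ walkWeight w p := ih hne
        _ ≤ walkWeight w (Walk.cons ha p) := by rw [hcons]; linarith
    · next hs =>
      have : walkWeight w (Walk.cons ha p.bypass) = w s(u,x) + walkWeight w p.bypass := by
        simp [walkWeight]
      rw [this, hcons]
      have := ih hne
      linarith

lemma shortest_le_walk [DecidableEq V] (w : Sym2 V → ℝ) {G : SimpleGraph V} {a b : V}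
    {p : G.Walk a b} (hp : IsShortestPath w G p) (q : G.Walk a b)
    (h : ∀ e ∈ q.edges, 0 ≤ w e) : walkWeight w p ≤ walkWeight w q :=
  le_trans (hp.2 q.bypass q.bypass_isPath)
    (walkWeight_bypass_le w q h)

/-- A structural prefix of a shortest path is shortest. -/
lemma shortest_prefix [DecidableEq V] (w : Sym2 V → ℝ) {G : SimpleGraph V} {a b c : V}
    {W : G.Walk a b} {R : G.Walk b c}
    (hP : IsShortestPath w G (W.append R))
    (hnn : ∀ e ∈ G.edgeSet, 0 ≤ w e) :
    IsShortestPath w G W := by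
  constructor
  · exact hP.1.of_append_left
  · intro q hq
    have h1 : walkWeight w (W.append R) ≤ walkWeight w (q.append R) :=
      shortest_le_walk w hP (q.append R)
        (fun e he => hnn e ((q.append R).edges_subset_edgeSet he))
    rw [walkWeight_append, walkWeight_append] at h1
    linarith

lemma shortest_of_transfer [DecidableEq V] (w : Sym2 V → ℝ) {G H : SimpleGraph V} (hHG : H ≤ G)
    {a b : V} (p : G.Walk a b) (hp : IsShortestPath w G p)
    (h : ∀ e ∈ p.edges, e ∈ H.edgeSet) :
    IsShortestPath w H (p.transfer H h) := by
  constructor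
  · exact hp.1.transfer h
  · intro q hq
    have hq' : ∀ e ∈ q.edges, e ∈ G.edgeSet :=
      fun e he => edgeSet_mono hHG (q.edges_subset_edgeSet he)
    have h1 : walkWeight w p ≤ walkWeight w (q.transfer G hq') :=
      hp.2 _ (hq.transfer hq')
    have h2 : walkWeight w (q.transfer G hq') = walkWeight w q := by
      simp [walkWeight, Walk.edges_transfer]
    have h3 : walkWeight w (p.transfer H h) = walkWeight w p := by
      simp [walkWeight, Walk.edges_transfer]
    rw [h3]
    linarith

/-- `Decomposable w G k p` : `p` is the concatenation of at most `k+1` shortest paths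
of `G` interleaved with at most `k` single edges. -/
inductive Decomposable (w : Sym2 V → ℝ) (G : SimpleGraph V) :
    ℕ → ∀ {a b : V}, G.Walk a b → Prop
  | single {a b : V} (k : ℕ) (p : G.Walk a b) (hp : IsShortestPath w G p) :
      Decomposable w G k p
  | cons {a b c d : V} (k : ℕ) (p : G.Walk a b) (h : G.Adj b c) (q : G.Walk c d)
      (hp : IsShortestPath w G p) (hq : Decomposable w G k q) :
      Decomposable w G (k + 1) (p.append (Walk.cons h q))

/-- The rank of a walk `p` in `G`: the least `k` such that `p` is `k`-decomposable. -/
noncomputable def pathRank (w : Sym2 V → ℝ) (G : SimpleGraph V) {a b : V} (p : G.Walk a b) : ℕ :=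
  sInf {k | Decomposable w G k p}

/-- Suppose `u'` is `u`-clean w.r.t. `D` and `π_{G−D}(u,v)` passes
through `u'`.  Let `Dstar` be any edge set such that `π(u,u')` contains no edge of `Dstar`
and no vertex of `T_u(u')` is incident to an edge of `Dstar`.  If `π_{G−D}(u,v)` traverses
an edge `e ∈ Dstar`, then for each endpoint `x` of `e` the path `π(u,x)` contains an edge
of `D`. -/
theorem stmt7 [Fintype V] [DecidableEq V] (G : SimpleGraph V) (w : Sym2 V → ℝ)
    (hw : ∀ e ∈ G.edgeSet, 0 < w e)
    (πG : ∀ a b : V, G.Walk a b) (hπG : ∀ a b : V, IsShortestPath w G (πG a b))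
    (huniqG : ∀ (a b : V) (p q : G.Walk a b),
      IsShortestPath w G p → IsShortestPath w G q → p = q)
    (D : Set (Sym2 V)) (hDsub : D ⊆ G.edgeSet)
    (huniqD : ∀ (a b : V) (p q : (G.deleteEdges D).Walk a b),
      IsShortestPath w (G.deleteEdges D) p → IsShortestPath w (G.deleteEdges D) q → p = q)
    (u v : V)
    (P : (G.deleteEdges D).Walk u v) (hP : IsShortestPath w (G.deleteEdges D) P)
    (u' : V)
    -- u' is u-clean w.r.t. D
    (hu'1 : ∀ e ∈ (πG u u').edges, e ∉ D)
    (hu'2 : ∀ x : V, u' ∈ (πG u x).support → ∀ e ∈ D, x ∉ e)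
    -- π_{G−D}(u,v) passes through u'
    (hu'P : u' ∈ P.support)
    (Dstar : Set (Sym2 V))
    -- π(u,u') contains no edge of Dstar, and no vertex of T_u(u') is incident to an edge
    -- of Dstar
    (hDs1 : ∀ e ∈ (πG u u').edges, e ∉ Dstar)
    (hDs2 : ∀ x : V, u' ∈ (πG u x).support → ∀ e ∈ Dstar, x ∉ e)
    -- π_{G−D}(u,v) traverses an edge e ∈ Dstar
    (e : Sym2 V) (he : e ∈ Dstar) (heP : e ∈ P.edges) :
    ∀ x ∈ e, ∃ f ∈ (πG u x).edges, f ∈ D := by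
  intro x hx
  revert he heP hx
  induction e using Sym2.ind with
  | _ y z =>
  intro he heP hx
  by_contra hcon
  push_neg at hcon
  have hnn : ∀ f ∈ (G.deleteEdges D).edgeSet, 0 ≤ w f := by
    intro f hf
    rw [edgeSet_deleteEdges] at hf
    exact le_of_lt (hw f hf.1)
  have hle : G.deleteEdges D ≤ G := deleteEdges_le D
  -- transfer π(u,x) to G − D
  have hux : ∀ f ∈ (πG u x).edges, f ∈ (G.deleteEdges D).edgeSet := by
    intro f hf
    rw [edgeSet_deleteEdges]
    exact ⟨(πG u x).edges_subset_edgeSet hf, hcon f hf⟩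
  have hp' : IsShortestPath w (G.deleteEdges D) ((πG u x).transfer _ hux) :=
    shortest_of_transfer w hle _ (hπG u x) hux
  -- transfer π(u,u') to G − D
  have huu' : ∀ f ∈ (πG u u').edges, f ∈ (G.deleteEdges D).edgeSet := by
    intro f hf
    rw [edgeSet_deleteEdges]
    exact ⟨(πG u u').edges_subset_edgeSet hf, hu'1 f hf⟩
  have hQ' : IsShortestPath w (G.deleteEdges D) ((πG u u').transfer _ huu') :=
    shortest_of_transfer w hle _ (hπG u u') huu'
  -- the prefix of P up to u' is shortest, hence equals π(u,u')
  have hPs : IsShortestPath w (G.deleteEdges D)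
      ((P.takeUntil u' hu'P).append (P.dropUntil u' hu'P)) := by
    rwa [P.take_spec hu'P]
  have htake : IsShortestPath w (G.deleteEdges D) (P.takeUntil u' hu'P) :=
    shortest_prefix w hPs hnn
  have htakeQ : P.takeUntil u' hu'P = (πG u u').transfer _ huu' :=
    huniqD u u' _ _ htake hQ'
  -- e is not on the prefix, hence lies on the suffix
  have hePedges : P.edges = (P.takeUntil u' hu'P).edges ++ (P.dropUntil u' hu'P).edges := by
    rw [← Walk.edges_append, P.take_spec hu'P]
  have hetake : s(y, z) ∉ (P.takeUntil u' hu'P).edges := by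
    rw [htakeQ, Walk.edges_transfer]
    intro hmem
    exact hDs1 _ hmem he
  have hedrop : s(y, z) ∈ (P.dropUntil u' hu'P).edges := by
    rw [hePedges] at heP
    rcases List.mem_append.1 heP with h | h
    · exact absurd h hetake
    · exact h
  -- x lies on the suffix
  have hxdrop : x ∈ (P.dropUntil u' hu'P).support := by
    rcases Sym2.mem_iff.1 hx with rfl | rfl
    · exact (P.dropUntil u' hu'P).fst_mem_support_of_mem_edges hedrop
    · exact (P.dropUntil u' hu'P).snd_mem_support_of_mem_edges hedrop
  -- the prefix of P up to x is shortest and contains u'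
  have hWR : ((P.takeUntil u' hu'P).append ((P.dropUntil u' hu'P).takeUntil x hxdrop)).append
      ((P.dropUntil u' hu'P).dropUntil x hxdrop) = P := by
    rw [← Walk.append_assoc, (P.dropUntil u' hu'P).take_spec hxdrop, P.take_spec hu'P]
  have hPs2 : IsShortestPath w (G.deleteEdges D)
      (((P.takeUntil u' hu'P).append ((P.dropUntil u' hu'P).takeUntil x hxdrop)).append
        ((P.dropUntil u' hu'P).dropUntil x hxdrop)) := by
    rwa [hWR]
  have hW : IsShortestPath w (G.deleteEdges D)
      ((P.takeUntil u' hu'P).append ((P.dropUntil u' hu'P).takeUntil x hxdrop)) :=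
    shortest_prefix w hPs2 hnn
  have hWp' : (P.takeUntil u' hu'P).append ((P.dropUntil u' hu'P).takeUntil x hxdrop)
      = (πG u x).transfer _ hux := huniqD u x _ _ hW hp'
  have hu'W : u' ∈ ((P.takeUntil u' hu'P).append
      ((P.dropUntil u' hu'P).takeUntil x hxdrop)).support :=
    (Walk.mem_support_append_iff _ _).2 (Or.inl (Walk.end_mem_support _))
  rw [hWp', Walk.support_transfer] at hu'W
  exact hDs2 x hu'W _ he hx
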